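/- arXiv:1808.10521 — 6 statements merged into one kernel-verified Lean document; each statement's English description precedes it below -/
import Mathlib

section
/- For all positive integers t and all 1 ≤ k ≤ t-1, the unsigned Stirling number of the first kind satisfies [t choose t-k] ≤ C(C(t,2), k), i.e. the number of permutations of [t] with exactly t-k cycles is at most the binomial coefficient of (t choose 2) over k. -/
/-!
Splitting permutations of `Fin (n + 1)` by the image of `0` (`Equiv.Perm.decomposeFin`) gives the
recurrence `[n + 1, m + 1] = n * [n, m + 1] + [n, m]`: composing with a transposition that joins a
fixed point to another cycle lowers the number of cycles by exactly one. So the permutations with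
`m` cycles are counted by `Nat.stirlingFirst`, and the bound follows by induction on `t` from the
same recurrence, `C(t + 1, 2) = C(t, 2) + t` and `C(N, k + 1) + t * C(N, k) ≤ C(N + t, k + 1)`.
-/

/-- The number of cycles (orbits, counting fixed points as cycles) of a
permutation of `Fin t`. -/
def cycleCount {t : ℕ} (σ : Equiv.Perm (Fin t)) : ℕ :=
  σ.cycleType.card + (Finset.univ.filter fun x => σ x = x).card

open Finset

namespace Equiv.Perm

variable {α : Type*} [DecidableEq α] [Fintype α]

def numCycles (σ : Perm α) : ℕ := Multiset.card σ.partition.parts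

theorem numCycles_eq (σ : Perm α) :
    σ.numCycles = Multiset.card σ.cycleType + (Fintype.card α - #σ.support) := by
  simp [numCycles, parts_partition]

theorem numCycles_one : (1 : Perm α).numCycles = Fintype.card α := by
  simp [numCycles_eq]

theorem IsCycle.numCycles_add_card_support {c : Perm α} (hc : c.IsCycle) :
    c.numCycles + #c.support = Fintype.card α + 1 := by
  have := c.support.card_le_univ
  rw [numCycles_eq, hc.cycleType]
  simp only [Multiset.card_singleton]
  omega

theorem Disjoint.numCycles_mul {σ τ : Perm α} (h : σ.Disjoint τ) :
    (σ * τ).numCycles + Fintype.card α = σ.numCycles + τ.numCycles := by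
  have hsupp := h.card_support_mul
  have := (σ * τ).support.card_le_univ
  rw [numCycles_eq, numCycles_eq, numCycles_eq, h.cycleType_mul, Multiset.card_add]
  omega

theorem IsCycle.numCycles_swap_mul {c : Perm α} (hc : c.IsCycle) {x : α} (hx : c x ≠ x) :
    (swap x (c x) * c).numCycles = c.numCycles + 1 := by
  have hcard := hc.numCycles_add_card_support
  by_cases hccx : c (c x) = x
  · have hc2 : #c.support = 2 := by
      rw [hc.eq_swap_of_apply_apply_eq_self hx hccx, card_support_swap hx.symm]
    have hsq : swap x (c x) * c = 1 := by
      nth_rw 2 [hc.eq_swap_of_apply_apply_eq_self hx hccx]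
      exact swap_mul_self _ _
    rw [hsq, numCycles_one]
    omega
  · have hx' : x ∈ c.support := mem_support.2 hx
    have hcard' := (hc.swap_mul hx hccx).numCycles_add_card_support
    rw [support_swap_mul_eq c x hccx, card_sdiff_of_subset (singleton_subset_iff.2 hx'),
      card_singleton] at hcard'
    have := card_pos.2 ⟨x, hx'⟩
    omega

theorem numCycles_swap_mul {g : Perm α} {x : α} (hx : g x ≠ x) :
    (swap x (g x) * g).numCycles = g.numCycles + 1 := by
  set c := g.cycleOf x
  have hc : c.IsCycle := g.isCycle_cycleOf hx
  have hcx : c x = g x := g.cycleOf_apply_self x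
  have hdisj : (g * c⁻¹).Disjoint c :=
    disjoint_mul_inv_of_mem_cycleFactorsFinset
      (cycleOf_mem_cycleFactorsFinset_iff.2 (mem_support.2 hx))
  have hg : g = c * (g * c⁻¹) := by rw [hdisj.symm.commute.eq, inv_mul_cancel_right]
  have hdisj' : (swap x (c x) * c).Disjoint (g * c⁻¹) := by
    rw [disjoint_iff_disjoint_support] at hdisj ⊢
    exact hdisj.symm.mono_left fun y hy => (mem_support_swap_mul_imp_mem_support_ne hy).1
  have h1 := hdisj.symm.numCycles_mul
  have h2 := hdisj'.numCycles_mul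
  rw [← hg] at h1
  rw [mul_assoc, ← hg, hc.numCycles_swap_mul (hcx ▸ hx)] at h2
  rw [← hcx]
  omega

theorem numCycles_swap_mul_of_apply_eq_self {f : Perm α} {a b : α} (ha : f a = a)
    (hab : a ≠ b) : (swap a b * f).numCycles + 1 = f.numCycles := by
  have hg : (swap a b * f) a = b := by simp [ha]
  have := numCycles_swap_mul (g := swap a b * f) (x := a) (by rw [hg]; exact hab.symm)
  rwa [hg, swap_mul_self_mul, eq_comm] at this

theorem numCycles_extendDomain {β : Type*} [DecidableEq β] [Fintype β] {p : β → Prop}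
    [DecidablePred p] (f : α ≃ Subtype p) (g : Perm α) :
    (g.extendDomain f).numCycles + Fintype.card α = g.numCycles + Fintype.card β := by
  have h1 := g.support.card_le_univ
  have h2 := Fintype.card_le_of_embedding (f.toEmbedding.trans (Function.Embedding.subtype p))
  rw [numCycles_eq, numCycles_eq, cycleType_extendDomain, card_support_extend_domain]
  omega

theorem decomposeFin_symm_zero {n : ℕ} (e : Perm (Fin n)) :
    decomposeFin.symm (0, e) = e.extendDomain (finSuccAboveEquiv 0) := by
  ext x
  refine Fin.cases ?_ (fun i => ?_) x
  · rw [decomposeFin_symm_apply_zero, extendDomain_apply_not_subtype _ _ (by simp)]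
  · have : i.succ = (finSuccAboveEquiv 0 i : Fin (n + 1)) := by simp [finSuccAboveEquiv_apply]
    rw [decomposeFin_symm_apply_succ, this, extendDomain_apply_image]
    simp [finSuccAboveEquiv_apply]

theorem decomposeFin_symm_eq_swap_mul {n : ℕ} (p : Fin (n + 1)) (e : Perm (Fin n)) :
    decomposeFin.symm (p, e) = swap 0 p * decomposeFin.symm (0, e) := by
  ext x
  refine Fin.cases ?_ (fun i => ?_) x <;> simp

theorem numCycles_decomposeFin_symm_zero {n : ℕ} (e : Perm (Fin n)) :
    (decomposeFin.symm (0, e)).numCycles = e.numCycles + 1 := by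
  have := numCycles_extendDomain (finSuccAboveEquiv (0 : Fin (n + 1))) e
  rw [← decomposeFin_symm_zero, Fintype.card_fin, Fintype.card_fin] at this
  omega

theorem numCycles_decomposeFin_symm_of_ne_zero {n : ℕ} {p : Fin (n + 1)} (hp : p ≠ 0)
    (e : Perm (Fin n)) : (decomposeFin.symm (p, e)).numCycles = e.numCycles := by
  have := numCycles_swap_mul_of_apply_eq_self (decomposeFin_symm_apply_zero 0 e) hp.symm
  rw [← decomposeFin_symm_eq_swap_mul, numCycles_decomposeFin_symm_zero] at this
  omega

theorem card_numCycles_eq_succ (n m : ℕ) :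
    #{σ : Perm (Fin (n + 1)) | σ.numCycles = m + 1} =
      n * #{e : Perm (Fin n) | e.numCycles = m + 1} + #{e : Perm (Fin n) | e.numCycles = m} := by
  simp only [card_filter]
  rw [← decomposeFin.symm.sum_comp, Fintype.sum_prod_type, Fin.sum_univ_succ, add_comm]
  simp only [numCycles_decomposeFin_symm_zero, add_left_inj,
    numCycles_decomposeFin_symm_of_ne_zero (Fin.succ_ne_zero _), sum_const, card_univ,
    Fintype.card_fin, smul_eq_mul]

theorem numCycles_pos [Nonempty α] (σ : Perm α) : 0 < σ.numCycles := by
  refine Multiset.card_pos.2 fun h => ?_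
  have := σ.partition.parts_sum
  rw [h, Multiset.sum_zero] at this
  exact Fintype.card_ne_zero this.symm

theorem card_numCycles_eq_stirlingFirst :
    ∀ n m : ℕ, #{σ : Perm (Fin n) | σ.numCycles = m} = Nat.stirlingFirst n m
  | 0, 0 => by simp [Subsingleton.elim _ (1 : Perm (Fin 0)), numCycles_one]
  | 0, m + 1 => by simp [Subsingleton.elim _ (1 : Perm (Fin 0)), numCycles_one]
  | n + 1, 0 => by simp [(numCycles_pos _).ne']
  | n + 1, m + 1 => by
    rw [card_numCycles_eq_succ, Nat.stirlingFirst_succ_succ, card_numCycles_eq_stirlingFirst n,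
      card_numCycles_eq_stirlingFirst n]

theorem cycleCount_eq_numCycles {t : ℕ} (σ : Perm (Fin t)) : cycleCount σ = σ.numCycles := by
  have : #{x | σ x = x} + #σ.support = Fintype.card (Fin t) :=
    card_filter_add_card_filter_not (s := univ) _
  rw [cycleCount, numCycles_eq]
  omega

end Equiv.Perm

theorem Nat.choose_succ_add_mul_choose_le (N j m : ℕ) :
    N.choose (j + 1) + m * N.choose j ≤ (N + m).choose (j + 1) := by
  induction m with
  | zero => simp
  | succ m ih =>
    have := Nat.choose_le_choose j (N.le_add_right m)
    rw [← add_assoc, Nat.choose_succ_succ (N + m)]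
    nlinarith

theorem Nat.stirlingFirst_sub_le_choose_choose :
    ∀ n k : ℕ, stirlingFirst (n + 1) (n + 1 - k) ≤ ((n + 1).choose 2).choose k
  | n, 0 => by simp [stirlingFirst_self]
  | 0, k + 1 => by simp
  | n + 1, k + 1 => by
    rcases Nat.lt_or_ge n k with hnk | hkn
    · simp [show n + 2 - (k + 1) = 0 by omega]
    have hsplit : n + 2 - (k + 1) = (n - k) + 1 := by omega
    have hpascal : (n + 2).choose 2 = (n + 1).choose 2 + (n + 1) := by
      rw [Nat.choose_succ_succ (n + 1) 1, Nat.choose_one_right, add_comm]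
    calc stirlingFirst (n + 2) (n + 2 - (k + 1))
        = (n + 1) * stirlingFirst (n + 1) (n + 1 - k) +
            stirlingFirst (n + 1) (n + 1 - (k + 1)) := by
          rw [hsplit, stirlingFirst_succ_succ, show n - k + 1 = n + 1 - k by omega,
            show n - k = n + 1 - (k + 1) by omega]
      _ ≤ (n + 1) * ((n + 1).choose 2).choose k + ((n + 1).choose 2).choose (k + 1) := by
          gcongr <;> exact stirlingFirst_sub_le_choose_choose n _
      _ ≤ ((n + 2).choose 2).choose (k + 1) := by
          rw [hpascal, add_comm]; exact choose_succ_add_mul_choose_le _ _ _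

theorem stmt_1_general (t k : ℕ) (ht : 0 < t) :
    (Finset.univ.filter fun σ : Equiv.Perm (Fin t) => cycleCount σ = t - k).card ≤
      Nat.choose (t.choose 2) k := by
  obtain ⟨n, rfl⟩ : ∃ n, t = n + 1 := ⟨t - 1, by omega⟩
  simp only [Equiv.Perm.cycleCount_eq_numCycles]
  rw [Equiv.Perm.card_numCycles_eq_stirlingFirst]
  exact Nat.stirlingFirst_sub_le_choose_choose n k

/-- The unsigned Stirling number of the first kind `[t, t-k]`, i.e. the number of
permutations of `[t]` with exactly `t - k` cycles, is at most `C(C(t,2), k)`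
for all `1 ≤ k ≤ t - 1`. -/
theorem stmt_1 (t k : ℕ) (ht : 0 < t) (hk1 : 1 ≤ k) (hk2 : k ≤ t - 1) :
    (Finset.univ.filter fun σ : Equiv.Perm (Fin t) => cycleCount σ = t - k).card ≤
      Nat.choose (t.choose 2) k :=
  stmt_1_general t k ht
end

section
/- Let t be a positive integer and d > t² a positive integer. Let M be the t! × t! real symmetric matrix indexed by permutations σ, σ' of [t] with M_{σσ'} = d^{c(σ⁻¹σ') - t} for σ ≠ σ' and M_{σσ} = 0, where c(π) is the number of cycles of π. Then the operator norm (largest singular value) of M is at most t(t-1)/d. -/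
/-- The `t! × t!` matrix indexed by permutations of `[t]` with entries
`M_{σσ'} = d^(c(σ⁻¹σ') - t)` off-diagonal and `0` on the diagonal. -/
noncomputable def permCycleMatrix (t d : ℕ) :
    Matrix (Equiv.Perm (Fin t)) (Equiv.Perm (Fin t)) ℝ :=
  fun σ σ' => if σ = σ' then 0 else (d : ℝ) ^ (cycleCount (σ⁻¹ * σ')) / (d : ℝ) ^ t

open Equiv Equiv.Perm Finset

namespace Equiv.Perm

variable {t : ℕ}

theorem cycleCount_add_card_support (σ : Perm (Fin t)) :
    cycleCount σ + #σ.support = Multiset.card σ.cycleType + t := by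
  have : (univ.filter fun x => σ x = x) = σ.supportᶜ := by ext; simp
  rw [cycleCount, this, add_assoc, card_compl_add_card, Fintype.card_fin]

theorem cycleCount_one : cycleCount (1 : Perm (Fin t)) = t := by
  simpa using cycleCount_add_card_support (1 : Perm (Fin t))

theorem Disjoint.cycleCount_mul {σ τ : Perm (Fin t)} (h : Disjoint σ τ) :
    cycleCount (σ * τ) + t = cycleCount σ + cycleCount τ := by
  have hστ := cycleCount_add_card_support (σ * τ)
  have hσ := cycleCount_add_card_support σ
  have hτ := cycleCount_add_card_support τ
  rw [h.cycleType_mul, Multiset.card_add, h.card_support_mul] at hστ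
  omega

theorem IsCycle.cycleCount_swap_mul {c : Perm (Fin t)} (hc : c.IsCycle) {a : Fin t}
    (ha : c a ≠ a) : cycleCount (swap a (c a) * c) = cycleCount c + 1 := by
  have hcc := cycleCount_add_card_support c
  rw [hc.cycleType, Multiset.card_singleton] at hcc
  by_cases h2 : c (c a) = a
  · have hc2 : c = swap a (c a) := hc.eq_swap_of_apply_apply_eq_self ha h2
    have hsupp : #c.support = 2 := card_support_eq_two.mpr ⟨a, c a, ha.symm, hc2⟩
    have hswap : swap a (c a) * c = 1 := by
      nth_rw 2 [hc2]
      exact swap_mul_self _ _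
    rw [hswap, cycleCount_one]
    omega
  · have hs := cycleCount_add_card_support (swap a (c a) * c)
    rw [(hc.swap_mul ha h2).cycleType, Multiset.card_singleton, support_swap_mul_eq c a h2,
      card_sdiff_of_subset (singleton_subset_iff.mpr (mem_support.mpr ha)), card_singleton] at hs
    have := hc.two_le_card_support
    omega

theorem cycleCount_swap_mul {f : Perm (Fin t)} {a : Fin t} (ha : f a ≠ a) :
    cycleCount (swap a (f a) * f) = cycleCount f + 1 := by
  set c := f.cycleOf a
  have hca : c a = f a := cycleOf_apply_self f a
  have hdisj : Disjoint c (f * c⁻¹) :=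
    (disjoint_mul_inv_of_mem_cycleFactorsFinset
      (cycleOf_mem_cycleFactorsFinset_iff.mpr (mem_support.mpr ha))).symm
  have hf : f = c * (f * c⁻¹) := by rw [hdisj.commute.eq, inv_mul_cancel_right]
  have hsub : (swap a (c a) * c).support ≤ c.support := by
    refine (support_mul_le _ _).trans (sup_le ?_ le_rfl)
    rw [support_swap (by rwa [hca, ne_comm])]
    have hac : a ∈ c.support := mem_support.mpr (hca ▸ ha)
    exact insert_subset hac (singleton_subset_iff.mpr (apply_mem_support.mpr hac))
  have hcycle : cycleCount (swap a (c a) * c) = cycleCount c + 1 :=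
    (isCycle_cycleOf f ha).cycleCount_swap_mul (by rwa [hca])
  have hsplit := hdisj.cycleCount_mul
  have hsplit' := (hdisj.mono hsub le_rfl).cycleCount_mul
  rw [← hf] at hsplit
  rw [mul_assoc, ← hf, hca] at hsplit'
  rw [hca] at hcycle
  omega

theorem mul_sum_pow_cycleCount_erase_one_le {d : ℝ} (hd : 0 ≤ d) :
    d * ∑ π ∈ univ.erase (1 : Perm (Fin t)), d ^ cycleCount π ≤
      t.choose 2 * ∑ π : Perm (Fin t), d ^ cycleCount π := by
  set P := (univ : Finset (Fin t × Fin t)).filter fun p => p.1 < p.2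
  have hP : #P = t.choose 2 := by simpa using Fintype.card_product_filter_lt (α := Fin t)
  have hstep : ∀ π ∈ univ.erase (1 : Perm (Fin t)),
      d * d ^ cycleCount π ≤ ∑ p ∈ P, d ^ cycleCount (swap p.1 p.2 * π) := by
    intro π hπ
    obtain ⟨a, ha⟩ : ∃ a, π a ≠ a := by
      by_contra! h
      exact (mem_erase.mp hπ).1 (Equiv.ext h)
    obtain ⟨p, hp, hswap⟩ : ∃ p ∈ P, swap p.1 p.2 = swap a (π a) := by
      rcases lt_or_gt_of_ne ha with h | h
      · exact ⟨(π a, a), by simpa [P] using h, swap_comm _ _⟩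
      · exact ⟨(a, π a), by simpa [P] using h, rfl⟩
    calc d * d ^ cycleCount π = d ^ cycleCount (swap a (π a) * π) := by
          rw [cycleCount_swap_mul ha, pow_succ']
      _ ≤ ∑ p ∈ P, d ^ cycleCount (swap p.1 p.2 * π) := by
          rw [← hswap]
          exact single_le_sum (f := fun p : Fin t × Fin t => d ^ cycleCount (swap p.1 p.2 * π))
            (fun _ _ => by positivity) hp
  calc d * ∑ π ∈ univ.erase (1 : Perm (Fin t)), d ^ cycleCount π
      ≤ ∑ π ∈ univ.erase (1 : Perm (Fin t)), ∑ p ∈ P,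
          d ^ cycleCount (swap p.1 p.2 * π) := by
        rw [mul_sum]
        exact sum_le_sum hstep
    _ ≤ ∑ π, ∑ p ∈ P, d ^ cycleCount (swap p.1 p.2 * π) :=
        sum_le_sum_of_subset_of_nonneg (erase_subset _ _) fun _ _ _ => by positivity
    _ = ∑ p ∈ P, ∑ π, d ^ cycleCount (swap p.1 p.2 * π) := sum_comm
    _ = ∑ p ∈ P, ∑ π : Perm (Fin t), d ^ cycleCount π := sum_congr rfl fun p _ =>
        Fintype.sum_equiv (Equiv.mulLeft (swap p.1 p.2)) _ _ fun _ => rfl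
    _ = t.choose 2 * ∑ π : Perm (Fin t), d ^ cycleCount π := by
        rw [sum_const, hP, nsmul_eq_mul]

theorem sum_pow_cycleCount_erase_one_div_le {d : ℕ} (hd : t ^ 2 < d) :
    ∑ π ∈ univ.erase (1 : Perm (Fin t)), (d : ℝ) ^ cycleCount π / (d : ℝ) ^ t ≤
      t * (t - 1) / d := by
  set S := ∑ π ∈ univ.erase (1 : Perm (Fin t)), (d : ℝ) ^ cycleCount π
  have hd0 : (0 : ℝ) < d := by exact_mod_cast (Nat.zero_le _).trans_lt hd
  have hrec := mul_sum_pow_cycleCount_erase_one_le (t := t) hd0.le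
  rw [← add_sum_erase _ _ (mem_univ 1), cycleCount_one, Nat.cast_choose_two] at hrec
  have hdt : (t : ℝ) * (t - 1) < d := by
    have : ((t ^ 2 : ℕ) : ℝ) < d := by exact_mod_cast hd
    push_cast at this
    nlinarith
  have hS : 0 ≤ S := sum_nonneg fun _ _ => by positivity
  have hD : (0 : ℝ) < (d : ℝ) ^ t := by positivity
  rw [← sum_div, div_le_div_iff₀ hD hd0]
  nlinarith

end Equiv.Perm

open scoped Matrix.Norms.L2Operator

theorem Matrix.l2_opNorm_of_inv_mul_le_sum {G : Type*} [Group G] [Fintype G] [DecidableEq G]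
    {g : G → ℝ} (hg : 0 ≤ g) :
    ‖Matrix.of fun a b : G => g (a⁻¹ * b)‖ ≤ ∑ x, g x := by
  have hs : 0 ≤ ∑ x, g x := sum_nonneg fun x _ => hg x
  obtain ⟨M, hM, hM_eq⟩ :=
    (exists_mem_doublyStochastic_eq_smul_iff (M := .of fun a b => g (a⁻¹ * b)) hs).mpr
      ⟨fun _ _ => hg _,
        fun a => Fintype.sum_equiv (Equiv.mulLeft a⁻¹) _ _ fun _ => rfl,
        fun b => Fintype.sum_equiv ((Equiv.inv G).trans (Equiv.mulRight b)) _ _ fun _ => rfl⟩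
  rw [hM_eq, norm_smul, Real.norm_of_nonneg hs]
  exact mul_le_of_le_one_right hs (l2_opNorm_le_one_of_mem_doublyStochastic hM)

theorem stmt_2_general (t d : ℕ) (hd : t ^ 2 < d) :
    ∀ x : EuclideanSpace ℝ (Equiv.Perm (Fin t)),
      ‖Matrix.toEuclideanLin (permCycleMatrix t d) x‖ ≤
        (t : ℝ) * ((t : ℝ) - 1) / (d : ℝ) * ‖x‖ := by
  intro x
  set g : Perm (Fin t) → ℝ := fun π =>
    if π = 1 then 0 else (d : ℝ) ^ cycleCount π / (d : ℝ) ^ t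
  have hg : 0 ≤ g := fun π => by
    simp only [g]
    split_ifs <;> positivity
  have hM : permCycleMatrix t d = Matrix.of fun σ σ' => g (σ⁻¹ * σ') := by
    ext σ σ'
    simp [permCycleMatrix, g, inv_mul_eq_one]
  have hsum : ∑ π, g π =
      ∑ π ∈ univ.erase (1 : Perm (Fin t)), (d : ℝ) ^ cycleCount π / (d : ℝ) ^ t := by
    rw [← sum_erase _ (show g 1 = 0 from if_pos rfl)]
    exact sum_congr rfl fun π hπ => if_neg (ne_of_mem_erase hπ)
  calc ‖Matrix.toEuclideanLin (permCycleMatrix t d) x‖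
      ≤ ‖permCycleMatrix t d‖ * ‖x‖ :=
        (Matrix.toEuclideanCLM (n := Perm (Fin t)) (𝕜 := ℝ) (permCycleMatrix t d)).le_opNorm x
    _ ≤ t * (t - 1) / d * ‖x‖ := by
      gcongr
      rw [hM]
      exact (Matrix.l2_opNorm_of_inv_mul_le_sum hg).trans
        (hsum ▸ sum_pow_cycleCount_erase_one_div_le hd)

/-- For `d > t²`, the operator norm (largest singular value) of the matrix `M` with
`M_{σσ'} = d^(c(σ⁻¹σ')-t)` off the diagonal and `0` on the diagonal is at most
`t(t-1)/d`. -/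
theorem stmt_2 (t d : ℕ) (ht : 0 < t) (hd : t ^ 2 < d) :
    ∀ x : EuclideanSpace ℝ (Equiv.Perm (Fin t)),
      ‖Matrix.toEuclideanLin (permCycleMatrix t d) x‖ ≤
        (t : ℝ) * ((t : ℝ) - 1) / (d : ℝ) * ‖x‖ :=
  stmt_2_general t d hd
end

section
/- Fix a positive integer t and 0 < ε < 1/(2t). Let N be the t! × t! real symmetric matrix indexed by permutations of [t] with N_{σσ'} = ε^{t - f(σ⁻¹σ')} for σ ≠ σ' and N_{σσ} = 0, where f(π) is the number of fixed points of π. Then the operator norm of N is at most 2ε²t². -/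
/-- The number of fixed points of a permutation of `Fin t`. -/
def fixedCount {t : ℕ} (σ : Equiv.Perm (Fin t)) : ℕ :=
  (Finset.univ.filter fun x => σ x = x).card

/-- The `t! × t!` matrix indexed by permutations of `[t]` with entries
`N_{σσ'} = ε^(t - f(σ⁻¹σ'))` off-diagonal and `0` on the diagonal, where `f` is
the number of fixed points. -/
noncomputable def permFixedMatrix (t : ℕ) (ε : ℝ) :
    Matrix (Equiv.Perm (Fin t)) (Equiv.Perm (Fin t)) ℝ :=
  fun σ σ' => if σ = σ' then 0 else ε ^ (t - fixedCount (σ⁻¹ * σ'))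

/-!
Write `N σ σ' = w (σ⁻¹ * σ')` with `w 1 = 0` and `w π = ε ^ #π.support` otherwise. `N` is symmetric
with nonnegative entries, so by the Schur test its `ℓ²` operator norm is at most its row sum
`∑ π, w π`. A permutation `π ≠ 1` moves at least two points, and at most `t ^ k` permutations move
exactly `k` points (read `π` off along an enumeration of its support), so the row sum is at most
`∑ k ≥ 2, (t ε) ^ k ≤ 2 (t ε) ^ 2`, as `t ε ≤ 1 / 2`.
-/

open Finset

theorem geom_sum_Ico_two_le_two_mul_sq {r : ℝ} (h0 : 0 ≤ r) (h : r ≤ 1 / 2) (n : ℕ) :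
    ∑ k ∈ Finset.Ico 2 n, r ^ k ≤ 2 * r ^ 2 := by
  refine (geom_sum_Ico_le_of_lt_one h0 (by linarith)).trans ?_
  rw [div_le_iff₀ (by linarith)]
  nlinarith [sq_nonneg r]

namespace Matrix

variable {m n : Type*} [Fintype m] [Fintype n]

theorem sum_sq_mulVec_le_of_sum_abs_le (A : Matrix m n ℝ) {R : ℝ} (hR : 0 ≤ R)
    (hrow : ∀ i, ∑ j, |A i j| ≤ R) (hcol : ∀ j, ∑ i, |A i j| ≤ R) (x : n → ℝ) :
    ∑ i, (A *ᵥ x) i ^ 2 ≤ R ^ 2 * ∑ j, x j ^ 2 := by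
  -- Schur test: Cauchy–Schwarz in each row with weights `|A i j|`, then swap the sums.
  have hentry : ∀ i, (A *ᵥ x) i ^ 2 ≤ R * ∑ j, |A i j| * x j ^ 2 := fun i => calc
    (A *ᵥ x) i ^ 2 ≤ (∑ j, |A i j| * |x j|) ^ 2 := by
      rw [← sq_abs]
      gcongr
      exact (abs_sum_le_sum_abs _ _).trans_eq (by simp [abs_mul])
    _ ≤ (∑ j, |A i j|) * ∑ j, |A i j| * x j ^ 2 :=
      sum_sq_le_sum_mul_sum_of_sq_le_mul _ (fun _ _ => abs_nonneg _)
        (fun _ _ => by positivity) fun _ _ => le_of_eq (by rw [mul_pow, sq_abs (x _)]; ring)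
    _ ≤ R * ∑ j, |A i j| * x j ^ 2 := by gcongr; exact hrow i
  calc ∑ i, (A *ᵥ x) i ^ 2 ≤ ∑ i, R * ∑ j, |A i j| * x j ^ 2 := sum_le_sum fun i _ => hentry i
    _ = R * ∑ j, (∑ i, |A i j|) * x j ^ 2 := by
      rw [← mul_sum, sum_comm]; simp only [sum_mul]
    _ ≤ R * ∑ j, R * x j ^ 2 := by gcongr with j; exact hcol j
    _ = R ^ 2 * ∑ j, x j ^ 2 := by rw [← mul_sum]; ring

theorem norm_toEuclideanLin_le_of_sum_abs_le [DecidableEq n] (A : Matrix m n ℝ) {R : ℝ}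
    (hR : 0 ≤ R) (hrow : ∀ i, ∑ j, |A i j| ≤ R) (hcol : ∀ j, ∑ i, |A i j| ≤ R)
    (x : EuclideanSpace ℝ n) : ‖toEuclideanLin A x‖ ≤ R * ‖x‖ := by
  rw [← pow_le_pow_iff_left₀ (norm_nonneg _) (by positivity) two_ne_zero, mul_pow,
    EuclideanSpace.real_norm_sq_eq, EuclideanSpace.real_norm_sq_eq]
  exact A.sum_sq_mulVec_le_of_sum_abs_le hR hrow hcol x.ofLp

end Matrix

theorem Finset.coe_comp_equivFinOfCardEq_symm_congr {α : Type*} {k : ℕ} {s s' : Finset α}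
    (hs : s = s') (h : #s = k) (h' : #s' = k) :
    ((↑) ∘ (s.equivFinOfCardEq h).symm : Fin k → α) = (↑) ∘ (s'.equivFinOfCardEq h').symm := by
  subst hs
  rfl

namespace Equiv.Perm

variable {α : Type*} [Fintype α] [DecidableEq α]

noncomputable def supportEnum {k : ℕ} (π : {π : Perm α // #π.support = k}) : Fin k → α :=
  (↑) ∘ (π.1.support.equivFinOfCardEq π.2).symm

theorem mem_range_supportEnum_iff {k : ℕ} (π : {π : Perm α // #π.support = k}) {x : α} :
    x ∈ Set.range (supportEnum π) ↔ x ∈ π.1.support := by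
  refine ⟨fun ⟨i, hi⟩ => hi ▸ Subtype.prop _, fun hx => ?_⟩
  exact ⟨π.1.support.equivFinOfCardEq π.2 ⟨x, hx⟩, by simp [supportEnum]⟩

theorem mem_range_comp_supportEnum_iff {k : ℕ} (π : {π : Perm α // #π.support = k}) {x : α} :
    x ∈ Set.range (π.1 ∘ supportEnum π) ↔ x ∈ π.1.support := by
  rw [Set.range_comp, Set.mem_image_equiv, mem_range_supportEnum_iff, ← apply_mem_support]
  simp

/-- The range of `π ∘ supportEnum π` is `π.support`, which determines the enumeration and
hence `π`. -/
theorem comp_supportEnum_injective (k : ℕ) :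
    Function.Injective fun π : {π : Perm α // #π.support = k} => π.1 ∘ supportEnum π := by
  intro π π' (h : π.1 ∘ supportEnum π = π'.1 ∘ supportEnum π')
  have hs : π.1.support = π'.1.support := by
    ext x
    rw [← mem_range_comp_supportEnum_iff, ← mem_range_comp_supportEnum_iff, h]
  have henum : supportEnum π = supportEnum π' :=
    Finset.coe_comp_equivFinOfCardEq_symm_congr hs π.2 π'.2
  refine Subtype.ext (Equiv.ext fun x => ?_)
  by_cases hx : x ∈ π.1.support
  · obtain ⟨i, rfl⟩ := (mem_range_supportEnum_iff π).2 hx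
    rw [← Function.comp_apply (f := π.1), h, henum, Function.comp_apply]
  · rw [notMem_support.1 hx, notMem_support.1 (hs ▸ hx)]

theorem card_filter_card_support_eq_le (k : ℕ) :
    #{π : Perm α | #π.support = k} ≤ Fintype.card α ^ k :=
  calc #{π : Perm α | #π.support = k} = Fintype.card {π : Perm α // #π.support = k} :=
        (Fintype.card_subtype _).symm
    _ ≤ Fintype.card (Fin k → α) := Fintype.card_le_of_injective _ (comp_supportEnum_injective k)
    _ = Fintype.card α ^ k := by simp

noncomputable def supportWeight (ε : ℝ) (π : Perm α) : ℝ :=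
  if π = 1 then 0 else ε ^ #π.support

theorem supportWeight_nonneg {ε : ℝ} (hε : 0 ≤ ε) (π : Perm α) : 0 ≤ supportWeight ε π := by
  unfold supportWeight
  split <;> positivity

theorem supportWeight_inv (ε : ℝ) (π : Perm α) : supportWeight ε π⁻¹ = supportWeight ε π := by
  simp only [supportWeight, inv_eq_one, support_inv]

theorem sum_supportWeight_eq (ε : ℝ) :
    ∑ π : Perm α, supportWeight ε π = ∑ π : Perm α with 2 ≤ #π.support, ε ^ #π.support := by
  rw [sum_filter]
  refine sum_congr rfl fun π _ => ?_
  by_cases hπ : π = 1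
  · simp [supportWeight, hπ]
  · simp [supportWeight, hπ, two_le_card_support_of_ne_one hπ]

theorem sum_pow_card_support_le {ε : ℝ} (hε : 0 ≤ ε) :
    ∑ π : Perm α with 2 ≤ #π.support, ε ^ #π.support ≤
      ∑ k ∈ Ico 2 (Fintype.card α + 1), (Fintype.card α * ε) ^ k := by
  have hmaps : ∀ π ∈ ({π | 2 ≤ #π.support} : Finset (Perm α)),
      #π.support ∈ Ico 2 (Fintype.card α + 1) := fun π hπ =>
    mem_Ico.2 ⟨(mem_filter.1 hπ).2, Nat.lt_succ_of_le (card_le_univ _)⟩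
  rw [← sum_fiberwise_of_maps_to hmaps]
  refine sum_le_sum fun k _ => ?_
  rw [sum_congr rfl fun π hπ => by rw [(mem_filter.1 hπ).2], sum_const, nsmul_eq_mul, mul_pow]
  gcongr
  exact_mod_cast (card_le_card (filter_subset_filter _ (subset_univ _))).trans
    (card_filter_card_support_eq_le k)

theorem sum_supportWeight_le {ε : ℝ} (hε : 0 ≤ ε) (h : Fintype.card α * ε ≤ 1 / 2) :
    ∑ π : Perm α, supportWeight ε π ≤ 2 * (Fintype.card α * ε) ^ 2 := by
  rw [sum_supportWeight_eq]
  exact (sum_pow_card_support_le hε).trans (geom_sum_Ico_two_le_two_mul_sq (by positivity) h _)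

end Equiv.Perm

open Equiv Perm

theorem fixedCount_add_card_support {t : ℕ} (π : Perm (Fin t)) :
    fixedCount π + #π.support = t := by
  have := card_filter_add_card_filter_not (s := univ) fun x => π x = x
  rwa [card_univ, Fintype.card_fin] at this

theorem permFixedMatrix_apply (t : ℕ) (ε : ℝ) (σ σ' : Perm (Fin t)) :
    permFixedMatrix t ε σ σ' = supportWeight ε (σ⁻¹ * σ') := by
  have := fixedCount_add_card_support (σ⁻¹ * σ')
  simp only [permFixedMatrix, supportWeight, inv_mul_eq_one]
  congr 2
  omega

theorem permFixedMatrix_isSymm (t : ℕ) (ε : ℝ) : (permFixedMatrix t ε).IsSymm := by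
  ext σ σ'
  rw [Matrix.transpose_apply, permFixedMatrix_apply, permFixedMatrix_apply, ← supportWeight_inv,
    mul_inv_rev, inv_inv]

theorem sum_abs_permFixedMatrix_row {t : ℕ} {ε : ℝ} (hε : 0 ≤ ε) (σ : Perm (Fin t)) :
    ∑ σ', |permFixedMatrix t ε σ σ'| = ∑ π : Perm (Fin t), supportWeight ε π := by
  simp only [permFixedMatrix_apply, abs_of_nonneg (supportWeight_nonneg hε _)]
  exact Equiv.sum_comp (Equiv.mulLeft σ⁻¹) _

theorem stmt_4_general (t : ℕ) (ε : ℝ) (hε0 : 0 < ε) (hε : ε < 1 / (2 * t)) :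
    ∀ x : EuclideanSpace ℝ (Equiv.Perm (Fin t)),
      ‖Matrix.toEuclideanLin (permFixedMatrix t ε) x‖ ≤
        2 * ε ^ 2 * (t : ℝ) ^ 2 * ‖x‖ := by
  have ht : (0 : ℝ) < 2 * t := one_div_pos.1 (hε0.trans hε)
  have htε : (t : ℝ) * ε ≤ 1 / 2 := by
    rw [lt_div_iff₀ ht] at hε
    linarith
  have hrow : ∀ σ, ∑ σ', |permFixedMatrix t ε σ σ'| ≤ 2 * ε ^ 2 * (t : ℝ) ^ 2 := fun σ => by
    rw [sum_abs_permFixedMatrix_row hε0.le]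
    have := sum_supportWeight_le hε0.le (by rwa [Fintype.card_fin])
    rw [Fintype.card_fin] at this
    linarith
  exact Matrix.norm_toEuclideanLin_le_of_sum_abs_le _ (by positivity) hrow fun σ' => by
    simpa only [(permFixedMatrix_isSymm t ε).apply] using hrow σ'

/-- For `0 < ε < 1/(2t)`, the operator norm of the matrix `N` with entries
`N_{σσ'} = ε^(t - f(σ⁻¹σ'))` off the diagonal and zero diagonal is at most `2ε²t²`. -/
theorem stmt_4 (t : ℕ) (ht : 0 < t) (ε : ℝ) (hε0 : 0 < ε) (hε : ε < 1 / (2 * t)) :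
    ∀ x : EuclideanSpace ℝ (Equiv.Perm (Fin t)),
      ‖Matrix.toEuclideanLin (permFixedMatrix t ε) x‖ ≤
        2 * ε ^ 2 * (t : ℝ) ^ 2 * ‖x‖ :=
  stmt_4_general t ε hε0 hε
end

section
/- Let V be a finite-dimensional complex inner product space, W, W' subspaces, and ε > 0 with 4√ε + 2ε < 1. If W and W' are everywhere close within ε (each is everywhere close to the other within ε), then the orthogonal complements W^⊥ and (W')^⊥ are everywhere close within 2√ε. -/
/-!
If `W` is everywhere close to `W'` within `ε` and `u ⟂ W'`, the orthogonal projection `p` of `u`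
onto `W` satisfies `‖p‖² = re ⟪p, u⟫ = re ⟪p - w', u⟫ ≤ ε ‖p‖ ‖u‖` for a suitable `w' ∈ W'`.
Hence `u - p ∈ Wᗮ` lies within `ε ‖u‖` of `u`, so `W'ᗮ` is everywhere close to `Wᗮ` within `ε`,
and `ε ≤ 2 √ε` once `ε ≤ 1`.
-/

open RCLike
open scoped InnerProductSpace

namespace Submodule

variable {𝕜 V : Type*} [RCLike 𝕜] [NormedAddCommGroup V] [InnerProductSpace 𝕜 V]

def EverywhereClose (W W' : Submodule 𝕜 V) (ε : ℝ) : Prop :=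
  ∀ w ∈ W, ‖w‖ = 1 → ∃ w' ∈ W', ‖w - w'‖ ≤ ε

namespace EverywhereClose

variable {W W' : Submodule 𝕜 V} {ε : ℝ}

theorem mono {δ : ℝ} (h : W.EverywhereClose W' ε) (hεδ : ε ≤ δ) : W.EverywhereClose W' δ :=
  fun w hw hw1 ↦ (h w hw hw1).imp fun _ ⟨hw', hle⟩ ↦ ⟨hw', hle.trans hεδ⟩

theorem exists_norm_sub_le_mul_norm (h : W.EverywhereClose W' ε) {w : V} (hw : w ∈ W) :
    ∃ w' ∈ W', ‖w - w'‖ ≤ ε * ‖w‖ := by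
  rcases eq_or_ne w 0 with rfl | hw0
  · exact ⟨0, W'.zero_mem, by simp⟩
  have hnorm : (‖w‖ : 𝕜) ≠ 0 := by simpa using hw0
  obtain ⟨w', hw', hle⟩ := h ((‖w‖ : 𝕜)⁻¹ • w) (W.smul_mem _ hw) (norm_smul_inv_norm hw0)
  refine ⟨(‖w‖ : 𝕜) • w', W'.smul_mem _ hw', ?_⟩
  have hw_eq : w - (‖w‖ : 𝕜) • w' = (‖w‖ : 𝕜) • ((‖w‖ : 𝕜)⁻¹ • w - w') := by
    rw [smul_sub, smul_inv_smul₀ hnorm]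
  rw [hw_eq, norm_smul, norm_ofReal, abs_norm, mul_comm]
  gcongr

theorem norm_starProjection_le [W.HasOrthogonalProjection] (h : W.EverywhereClose W' ε)
    (hε : 0 ≤ ε) {u : V} (hu : u ∈ W'ᗮ) : ‖W.starProjection u‖ ≤ ε * ‖u‖ := by
  set p := W.starProjection u
  obtain ⟨w', hw', hle⟩ := h.exists_norm_sub_le_mul_norm (W.starProjection_apply_mem u)
  -- `u ⟂ w'`, so `w'` can be subtracted from `p` in `‖p‖² = re ⟪p, u⟫`
  have hsq : ‖p‖ ^ 2 = re ⟪p - w', u⟫_𝕜 := by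
    rw [inner_sub_left, inner_right_of_mem_orthogonal hw' hu, sub_zero,
      re_inner_starProjection_eq_normSq]
    rfl
  have hpu : ‖p‖ * ‖p‖ ≤ ε * ‖u‖ * ‖p‖ :=
    calc ‖p‖ * ‖p‖ = re ⟪p - w', u⟫_𝕜 := by rw [← sq, hsq]
      _ ≤ ‖p - w'‖ * ‖u‖ := re_inner_le_norm _ _
      _ ≤ ε * ‖p‖ * ‖u‖ := by gcongr
      _ = ε * ‖u‖ * ‖p‖ := by ring
  rcases (norm_nonneg p).eq_or_lt with hp0 | hp0
  · rw [← hp0]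
    positivity
  · exact le_of_mul_le_mul_right hpu hp0

theorem orthogonal [W.HasOrthogonalProjection] (h : W.EverywhereClose W' ε) (hε : 0 ≤ ε) :
    W'ᗮ.EverywhereClose Wᗮ ε := by
  intro u hu hu1
  refine ⟨u - W.starProjection u, W.sub_starProjection_mem_orthogonal u, ?_⟩
  simpa [hu1] using h.norm_starProjection_le hε hu

end EverywhereClose

end Submodule

/-- If subspaces `W`, `W'` of a finite-dimensional complex inner product space
are everywhere close within `ε` (each unit vector of either is within `ε` of the
other subspace), and `4√ε + 2ε < 1`, then the orthogonal complements `W^⊥` and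
`(W')^⊥` are everywhere close within `2√ε`. -/
theorem stmt_10 {V : Type*} [NormedAddCommGroup V] [InnerProductSpace ℂ V]
    [FiniteDimensional ℂ V] (W W' : Submodule ℂ V) (ε : ℝ) (hε0 : 0 < ε)
    (hsmall : 4 * Real.sqrt ε + 2 * ε < 1)
    (h1 : ∀ w ∈ W, ‖w‖ = 1 → ∃ w' ∈ W', ‖w - w'‖ ≤ ε)
    (h2 : ∀ w' ∈ W', ‖w'‖ = 1 → ∃ w ∈ W, ‖w' - w‖ ≤ ε) :
    (∀ u ∈ Wᗮ, ‖u‖ = 1 → ∃ v ∈ W'ᗮ, ‖u - v‖ ≤ 2 * Real.sqrt ε) ∧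
    (∀ v ∈ W'ᗮ, ‖v‖ = 1 → ∃ u ∈ Wᗮ, ‖v - u‖ ≤ 2 * Real.sqrt ε) := by
  have hε1 : ε ≤ 1 := by nlinarith [Real.sqrt_nonneg ε]
  have hε_le : ε ≤ 2 * Real.sqrt ε := by
    linarith [Real.le_sqrt_self_iff.mpr hε1, Real.sqrt_nonneg ε]
  have close : W.EverywhereClose W' ε := h1
  have close' : W'.EverywhereClose W ε := h2
  exact ⟨(close'.orthogonal hε0.le).mono hε_le, (close.orthogonal hε0.le).mono hε_le⟩
end

section
/- Let d > t² and D ≥ d. For each σ ∈ S_t let (α_1)_σ, (α_2)_σ be the normalized permutation operators D^{-t/2}Σ_σ on (ℂ^D)^{⊗t} and d^{-t/2}Σ_σ on (ℂ^d)^{⊗t} respectively, and α_σ = (α_1)_σ ⊗ (α_2)_σ. Then for any coefficients a_σ ∈ ℂ, if β = Σ_σ a_σ α_σ has Hilbert-Schmidt norm 1, then Σ_σ |a_σ|² lies in the interval [1/(1 + t(t-1)/(Dd)), 1/(1 - t(t-1)/(Dd))]. -/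
open Matrix Kronecker

/-- The unitary `Σ_σ` on `(ℂ^d)^{⊗t}` permuting the tensor factors according to
`σ ∈ S_t`, written as a matrix on the index set `Fin t → Fin d`. -/
def permTensor (d t : ℕ) (σ : Equiv.Perm (Fin t)) :
    Matrix (Fin t → Fin d) (Fin t → Fin d) ℂ :=
  fun r c => if r = c ∘ σ.symm then 1 else 0

/-- The normalized permutation operator `α_σ = d^{-t/2} Σ_σ`. -/
noncomputable def alphaMat (d t : ℕ) (σ : Equiv.Perm (Fin t)) :
    Matrix (Fin t → Fin d) (Fin t → Fin d) ℂ :=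
  ((Real.sqrt d : ℂ))⁻¹ ^ t • permTensor d t σ

open Finset Equiv

/-! A permutation `π` of `α` fixes exactly `q ^ c(π)` functions `α → X`, where `q = |X|` and `c(π)`
is the number of cycles of `π`. Hence `tr (Σ_σ'† Σ_σ) = q ^ c(σ⁻¹σ')`, and the Gram matrix of the
`α_σ` is the convolution matrix on `S_t` of the weight `w(π) = (Dd) ^ (c(π) - t)`. This weight is
`1` at the identity, and its total mass is the rising factorial `q (q + 1) ⋯ (q + t - 1) / q ^ t`
with `q = Dd` (removing the point `0` from a permutation of `Fin (t + 1)` either deletes a fixed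
point or shortens a cycle), which is at most `1 + t(t-1)/(Dd)`. The Schur test for convolution
matrices then gives `|‖β‖² - Σ_σ |a_σ|²| ≤ t(t-1)/(Dd) · Σ_σ |a_σ|²`. -/

def fixedFunCount {α : Type*} [Fintype α] [DecidableEq α] (X : Type*) [Fintype X]
    [DecidableEq X] (π : Perm α) : ℕ :=
  #{f : α → X | f ∘ π = f}

theorem comp_decomposeFin_symm_eq_self_iff {X : Type*} {t : ℕ} (f : Fin (t + 1) → X)
    (p : Fin (t + 1)) (e : Perm (Fin t)) :
    f ∘ Perm.decomposeFin.symm (p, e) = f ↔ f p = f 0 ∧ Fin.tail f ∘ e = Fin.tail f := by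
  constructor
  · intro h
    have h0 : f p = f 0 := by
      simpa [Perm.decomposeFin_symm_apply_zero] using congrFun h 0
    refine ⟨h0, funext fun i => ?_⟩
    simpa [Fin.tail, Perm.decomposeFin_symm_apply_succ, apply_swap_eq_self h0.symm] using
      congrFun h i.succ
  · rintro ⟨h0, he⟩
    funext i
    refine Fin.cases ?_ (fun i => ?_) i
    · simpa [Perm.decomposeFin_symm_apply_zero] using h0
    · simpa [Fin.tail, Perm.decomposeFin_symm_apply_succ, apply_swap_eq_self h0.symm] using
        congrFun he i

theorem comp_symm_eq_comp_symm_iff {α X : Type*} (r : α → X) (σ σ' : Perm α) :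
    r ∘ σ.symm = r ∘ σ'.symm ↔ r ∘ (σ⁻¹ * σ') = r := by
  constructor
  · intro h
    funext x
    simpa using congrFun h (σ' x)
  · intro h
    funext y
    simpa using congrFun h (σ'.symm y)

section fixedFunCount

variable {α X Y : Type*} [Fintype α] [DecidableEq α] [Fintype X] [DecidableEq X] [Fintype Y]
  [DecidableEq Y]

theorem fixedFunCount_one : fixedFunCount X (1 : Perm α) = Fintype.card X ^ Fintype.card α := by
  simp [fixedFunCount]

theorem fixedFunCount_prod (π : Perm α) :
    fixedFunCount (X × Y) π = fixedFunCount X π * fixedFunCount Y π := by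
  simp only [fixedFunCount, ← Fintype.card_subtype, ← Fintype.card_prod]
  refine Fintype.card_congr
    (((arrowProdEquivProdArrow α _ _).subtypeEquiv fun f => ?_).trans subtypeProdEquivProd)
  simp [funext_iff, Prod.ext_iff, forall_and, arrowProdEquivProdArrow]

theorem sum_sum_ite_cons_apply_eq {t : ℕ} (g : Fin t → X) :
    ∑ p : Fin (t + 1), ∑ x : X, (if (Fin.cons x g : Fin (t + 1) → X) p = x then 1 else 0) =
      Fintype.card X + t := by
  simp [Fin.sum_univ_succ, filter_eq]

theorem sum_fixedFunCount_succ (t : ℕ) :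
    ∑ π : Perm (Fin (t + 1)), fixedFunCount X π =
      (Fintype.card X + t) * ∑ e : Perm (Fin t), fixedFunCount X e := by
  rw [← Perm.decomposeFin.symm.sum_comp, Fintype.sum_prod_type, sum_comm, mul_sum]
  refine sum_congr rfl fun e _ => ?_
  simp only [fixedFunCount, card_filter, comp_decomposeFin_symm_eq_self_iff,
    ← (Fin.consEquiv fun _ => X).sum_comp, Fintype.sum_prod_type]
  simp only [Fin.consEquiv, Equiv.coe_fn_mk, Fin.cons_zero, Fin.tail_cons, ite_and]
  rw [mul_sum]
  refine ((sum_congr rfl fun _ _ => sum_comm).trans sum_comm).trans (sum_congr rfl fun g _ => ?_)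
  simp only [← sum_sum_ite_cons_apply_eq g, sum_mul, ite_zero_mul, one_mul]

theorem sum_fixedFunCount (t : ℕ) :
    ∑ π : Perm (Fin t), fixedFunCount X π = ∏ k ∈ range t, (Fintype.card X + k) := by
  induction t with
  | zero => simp [fixedFunCount_one]
  | succ t ih => rw [sum_fixedFunCount_succ, ih, prod_range_succ, mul_comm]

end fixedFunCount

theorem prod_range_one_add_mul_le {x : ℝ} (hx : 0 ≤ x) (t : ℕ)
    (ht : (t : ℝ) * (t - 1) * x ≤ 1) :
    ∏ k ∈ range t, (1 + k * x) ≤ 1 + t * (t - 1) * x := by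
  induction t with
  | zero => simp
  | succ t ih =>
    push_cast at ht ⊢
    have ht' : (t : ℝ) * (t - 1) * x ≤ 1 := by
      refine le_trans ?_ ht
      have : (0 : ℝ) ≤ t := t.cast_nonneg
      nlinarith
    rw [prod_range_succ]
    have htx : 0 ≤ (t : ℝ) * x := by positivity
    calc (∏ k ∈ range t, (1 + k * x)) * (1 + t * x)
        ≤ (1 + t * (t - 1) * x) * (1 + t * x) := by gcongr; exact ih ht'
      _ ≤ 1 + (t + 1) * (t + 1 - 1) * x := by nlinarith [mul_le_mul_of_nonneg_left ht' htx]

/-- `permWeight X π = |X| ^ (c(π) - |α|)`, with `c(π)` the number of cycles of `π`. -/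
noncomputable def permWeight {α : Type*} [Fintype α] [DecidableEq α] (X : Type*) [Fintype X]
    [DecidableEq X] (π : Perm α) : ℝ :=
  fixedFunCount X π / (Fintype.card X : ℝ) ^ Fintype.card α

section permWeight

variable {α X Y : Type*} [Fintype α] [DecidableEq α] [Fintype X] [DecidableEq X] [Fintype Y]
  [DecidableEq Y]

theorem permWeight_nonneg (π : Perm α) : 0 ≤ permWeight X π := by
  unfold permWeight; positivity

theorem permWeight_one [Nonempty X] : permWeight X (1 : Perm α) = 1 := by
  simp [permWeight, fixedFunCount_one]

theorem permWeight_prod (π : Perm α) :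
    permWeight (X × Y) π = permWeight X π * permWeight Y π := by
  simp only [permWeight, fixedFunCount_prod, Fintype.card_prod]
  push_cast
  rw [mul_pow, mul_div_mul_comm]

theorem sum_permWeight [Nonempty X] (t : ℕ) :
    ∑ π : Perm (Fin t), permWeight X π = ∏ k ∈ range t, (1 + k * (Fintype.card X : ℝ)⁻¹) := by
  have hX : (Fintype.card X : ℝ) ≠ 0 := by positivity
  simp only [permWeight, Fintype.card_fin, ← sum_div, ← Nat.cast_sum, sum_fixedFunCount]
  rw [Nat.cast_prod, pow_eq_prod_const, ← prod_div_distrib]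
  refine prod_congr rfl fun k _ => ?_
  push_cast
  field_simp

theorem sum_permWeight_le [Nonempty X] (t : ℕ) (ht : (t : ℝ) * (t - 1) ≤ Fintype.card X) :
    ∑ π : Perm (Fin t), permWeight X π ≤ 1 + t * (t - 1) / Fintype.card X := by
  have hX : (0 : ℝ) < Fintype.card X := by positivity
  rw [sum_permWeight, div_eq_mul_inv]
  exact prod_range_one_add_mul_le (by positivity) t (by rwa [← div_eq_mul_inv, div_le_one hX])

end permWeight

section convolution

variable {G : Type*} [Group G] [Fintype G] {𝕜 : Type*} [RCLike 𝕜]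

theorem norm_sum_sum_conj_mul_le (f a : G → 𝕜) :
    ‖∑ x, ∑ y, star (a x) * a y * f (y⁻¹ * x)‖ ≤ (∑ g, ‖f g‖) * ∑ x, ‖a x‖ ^ 2 := by
  have hrow : ∀ x, ∑ y, ‖f (y⁻¹ * x)‖ = ∑ g, ‖f g‖ := fun x =>
    Equiv.sum_comp ((Equiv.inv G).trans (Equiv.mulRight x)) (fun g => ‖f g‖)
  have hcol : ∀ y, ∑ x, ‖f (y⁻¹ * x)‖ = ∑ g, ‖f g‖ := fun y =>
    Equiv.sum_comp (Equiv.mulLeft y⁻¹) (fun g => ‖f g‖)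
  calc ‖∑ x, ∑ y, star (a x) * a y * f (y⁻¹ * x)‖
      ≤ ∑ x, ∑ y, (‖a x‖ ^ 2 / 2 + ‖a y‖ ^ 2 / 2) * ‖f (y⁻¹ * x)‖ := by
        refine (norm_sum_le _ _).trans (sum_le_sum fun x _ => (norm_sum_le _ _).trans
          (sum_le_sum fun y _ => ?_))
        rw [norm_mul, norm_mul, norm_star]
        gcongr
        nlinarith [sq_nonneg (‖a x‖ - ‖a y‖)]
    _ = (∑ g, ‖f g‖) * ∑ x, ‖a x‖ ^ 2 := by
        simp only [add_mul, sum_add_distrib]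
        rw [sum_comm (f := fun x y => ‖a y‖ ^ 2 / 2 * ‖f (y⁻¹ * x)‖)]
        simp only [← mul_sum, hrow, hcol, ← sum_mul, ← sum_div]
        ring

theorem norm_sum_sum_conj_mul_sub_le (f a : G → 𝕜) (hf : f 1 = 1) :
    ‖∑ x, ∑ y, star (a x) * a y * f (y⁻¹ * x) - ∑ x, (‖a x‖ ^ 2 : 𝕜)‖ ≤
      (∑ g, ‖f g‖ - 1) * ∑ x, ‖a x‖ ^ 2 := by
  classical
  have hnorm : ∑ g, ‖(f - Pi.single 1 1 : G → 𝕜) g‖ = ∑ g, ‖f g‖ - 1 := by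
    have hpt : ∀ g, ‖(f - Pi.single 1 1 : G → 𝕜) g‖ = ‖f g‖ - (Pi.single 1 1 : G → ℝ) g := by
      intro g
      rcases eq_or_ne g 1 with rfl | hg
      · simp [hf]
      · simp [hg]
    rw [sum_congr rfl fun g _ => hpt g, sum_sub_distrib, sum_pi_single', if_pos (mem_univ _)]
  have hdiag : ∑ x, ∑ y, star (a x) * a y * (Pi.single 1 1 : G → 𝕜) (y⁻¹ * x) =
      ∑ x, (‖a x‖ ^ 2 : 𝕜) := by
    simp [Pi.single_apply, inv_mul_eq_one, RCLike.star_def, RCLike.conj_mul]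
  have h := norm_sum_sum_conj_mul_le (f - Pi.single 1 1 : G → 𝕜) a
  rw [hnorm] at h
  convert h using 2
  simp only [Pi.sub_apply, mul_sub, sum_sub_distrib, hdiag]

end convolution

theorem trace_conjTranspose_mul_self_sum {R ι m n : Type*} [CommRing R] [StarRing R] [Fintype ι]
    [Fintype m] [Fintype n] (a : ι → R) (M : ι → Matrix m n R) :
    ((∑ i, a i • M i)ᴴ * ∑ i, a i • M i).trace =
      ∑ i, ∑ j, star (a i) * a j * ((M i)ᴴ * M j).trace := by
  rw [conjTranspose_sum, Matrix.sum_mul, trace_sum]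
  refine sum_congr rfl fun i _ => ?_
  rw [Matrix.mul_sum, trace_sum]
  refine sum_congr rfl fun j _ => ?_
  rw [conjTranspose_smul, Matrix.smul_mul, Matrix.mul_smul, trace_smul, trace_smul, smul_eq_mul,
    smul_eq_mul, mul_assoc]

theorem trace_conjTranspose_kronecker_mul {R l m n p : Type*} [CommRing R] [StarRing R]
    [Fintype l] [Fintype m] [Fintype n] [Fintype p] (A C : Matrix l m R) (B E : Matrix n p R) :
    ((A ⊗ₖ B)ᴴ * (C ⊗ₖ E)).trace = (Aᴴ * C).trace * (Bᴴ * E).trace := by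
  rw [conjTranspose_kronecker, ← mul_kronecker_mul, trace_kronecker]

theorem trace_conjTranspose_permTensor_mul (n t : ℕ) (σ' σ : Perm (Fin t)) :
    ((permTensor n t σ')ᴴ * permTensor n t σ).trace = fixedFunCount (Fin n) (σ⁻¹ * σ') := by
  simp [Matrix.trace, Matrix.mul_apply, permTensor, fixedFunCount, comp_symm_eq_comp_symm_iff]
  congr

theorem trace_conjTranspose_alphaMat_mul (n t : ℕ) (σ' σ : Perm (Fin t)) :
    ((alphaMat n t σ')ᴴ * alphaMat n t σ).trace = permWeight (Fin n) (σ⁻¹ * σ') := by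
  rw [alphaMat, alphaMat, conjTranspose_smul, Matrix.smul_mul, Matrix.mul_smul, trace_smul,
    trace_smul, trace_conjTranspose_permTensor_mul, smul_eq_mul, smul_eq_mul, ← mul_assoc,
    ← Complex.ofReal_inv, ← Complex.ofReal_pow, Complex.star_def, Complex.conj_ofReal,
    ← Complex.ofReal_mul, ← mul_pow, ← mul_inv, Real.mul_self_sqrt n.cast_nonneg, permWeight]
  simp [div_eq_inv_mul]

theorem mul_sub_one_lt_of_sq_lt {t N : ℕ} (h : t ^ 2 < N) : (t : ℝ) * (t - 1) < N := by
  have : ((t ^ 2 : ℕ) : ℝ) < N := by exact_mod_cast h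
  push_cast at this
  nlinarith [t.cast_nonneg (α := ℝ)]

theorem abs_mul_sub_one_div_lt_one {t N : ℕ} (h : t ^ 2 < N) : |(t : ℝ) * (t - 1) / N| < 1 := by
  have hN : (1 : ℝ) ≤ N := by exact_mod_cast (show 1 ≤ N by omega)
  rw [abs_lt, lt_div_iff₀ (by positivity), div_lt_one (by positivity)]
  exact ⟨by nlinarith [sq_nonneg ((t : ℝ) - 1 / 2)], mul_sub_one_lt_of_sq_lt h⟩

theorem one_div_one_add_le_and_le_one_div_one_sub {S ε : ℝ} (hε : |ε| < 1)
    (h : |1 - S| ≤ ε * S) : 1 / (1 + ε) ≤ S ∧ S ≤ 1 / (1 - ε) := by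
  obtain ⟨hε₀, hε₁⟩ := abs_lt.mp hε
  obtain ⟨hlo, hhi⟩ := abs_le.mp h
  constructor
  · rw [div_le_iff₀ (by linarith)]; linarith
  · rw [le_div_iff₀ (by linarith)]; linarith

theorem stmt_11_general (t d D : ℕ) (hd : t ^ 2 < d) (hD : d ≤ D)
    (a : Equiv.Perm (Fin t) → ℂ)
    (β : Matrix ((Fin t → Fin D) × (Fin t → Fin d))
      ((Fin t → Fin D) × (Fin t → Fin d)) ℂ)
    (hβdef : β = ∑ σ : Equiv.Perm (Fin t), a σ • (alphaMat D t σ ⊗ₖ alphaMat d t σ))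
    (hβnorm : (βᴴ * β).trace = 1) :
    1 / (1 + (t : ℝ) * ((t : ℝ) - 1) / ((D : ℝ) * d)) ≤ ∑ σ, ‖a σ‖ ^ 2 ∧
    ∑ σ, ‖a σ‖ ^ 2 ≤ 1 / (1 - (t : ℝ) * ((t : ℝ) - 1) / ((D : ℝ) * d)) := by
  have : NeZero d := ⟨by omega⟩
  have : NeZero D := ⟨by omega⟩
  have hN : t ^ 2 < D * d := hd.trans_le (Nat.le_mul_of_pos_left d (by omega))
  set w : Perm (Fin t) → ℂ := fun π => (permWeight (Fin D × Fin d) π : ℂ)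
  have hgram : (βᴴ * β).trace = ∑ x, ∑ y, star (a x) * a y * w (y⁻¹ * x) := by
    simp only [w, hβdef, trace_conjTranspose_mul_self_sum, trace_conjTranspose_kronecker_mul,
      trace_conjTranspose_alphaMat_mul, permWeight_prod, Complex.ofReal_mul]
  have hmass : ∑ π, ‖w π‖ ≤ 1 + t * (t - 1) / (D * d) := by
    simpa [w, Real.norm_of_nonneg (permWeight_nonneg _)] using
      sum_permWeight_le (X := Fin D × Fin d) t (by simpa using (mul_sub_one_lt_of_sq_lt hN).le)
  have hdev := norm_sum_sum_conj_mul_sub_le w a (by simp [w, permWeight_one])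
  rw [← hgram, hβnorm] at hdev
  refine one_div_one_add_le_and_le_one_div_one_sub (by simpa using abs_mul_sub_one_div_lt_one hN) ?_
  calc |1 - ∑ σ, ‖a σ‖ ^ 2| = ‖(1 : ℂ) - ∑ σ, (‖a σ‖ : ℂ) ^ 2‖ := by
        rw [← Real.norm_eq_abs, ← Complex.norm_real]; push_cast; rfl
    _ ≤ (∑ π, ‖w π‖ - 1) * ∑ σ, ‖a σ‖ ^ 2 := hdev
    _ ≤ (t : ℝ) * (t - 1) / (D * d) * ∑ σ, ‖a σ‖ ^ 2 := by gcongr; linarith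

/-- Let `d > t²`, `D ≥ d`, and `α_σ = (α₁)_σ ⊗ (α₂)_σ` with
`(α₁)_σ = D^{-t/2} Σ_σ` and `(α₂)_σ = d^{-t/2} Σ_σ`. If `β = Σ_σ a_σ α_σ` has
Hilbert-Schmidt norm 1, then `Σ_σ |a_σ|²` lies in
`[1/(1 + t(t-1)/(Dd)), 1/(1 - t(t-1)/(Dd))]`. -/
theorem stmt_11 (t d D : ℕ) (ht : 0 < t) (hd : t ^ 2 < d) (hD : d ≤ D)
    (a : Equiv.Perm (Fin t) → ℂ)
    (β : Matrix ((Fin t → Fin D) × (Fin t → Fin d))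
      ((Fin t → Fin D) × (Fin t → Fin d)) ℂ)
    (hβdef : β = ∑ σ : Equiv.Perm (Fin t), a σ • (alphaMat D t σ ⊗ₖ alphaMat d t σ))
    (hβnorm : (βᴴ * β).trace = 1) :
    1 / (1 + (t : ℝ) * ((t : ℝ) - 1) / ((D : ℝ) * d)) ≤ ∑ σ, ‖a σ‖ ^ 2 ∧
    ∑ σ, ‖a σ‖ ^ 2 ≤ 1 / (1 - (t : ℝ) * ((t : ℝ) - 1) / ((D : ℝ) * d)) :=
  stmt_11_general t d D hd hD a β hβdef hβnorm
end

section
/- Let b, c ∈ ℂ^{S_t} be vectors indexed by permutations with ‖b‖₂, ‖c‖₂ ≤ (1 - t(t-1)/(2d))^{-1/2}, and let d > t². Then Σ_{σ' ≠ σ} |c_{σ'}||b_σ| d^{c(σ'⁻¹σ) - t} ≤ (t(t-1)/d)·(1 - t(t-1)/(2d))^{-1} ≤ 2t(t-1)/d. -/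
open Finset

namespace Equiv.Perm

variable {α : Type*} [Fintype α] [DecidableEq α]

/-- `card α` minus the number of cycles of `π`, fixed points included. -/
def defect (π : Perm α) : ℕ := #π.support - Multiset.card π.cycleType

theorem two_mul_card_cycleType_le (π : Perm α) :
    2 * Multiset.card π.cycleType ≤ #π.support := by
  rw [← π.sum_cycleType, mul_comm]
  exact Multiset.card_nsmul_le_sum fun _ hk => two_le_of_mem_cycleType hk

theorem defect_eq_zero_iff {π : Perm α} : defect π = 0 ↔ π = 1 := by
  refine ⟨fun h => ?_, fun h => by simp [h, defect]⟩
  by_contra hne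
  have := card_cycleType_pos.2 hne
  have := two_mul_card_cycleType_le π
  unfold defect at h
  omega

theorem defect_le_card (π : Perm α) : defect π ≤ Fintype.card α :=
  (Nat.sub_le _ _).trans (card_le_univ _)

theorem Disjoint.defect_mul {f g : Perm α} (h : f.Disjoint g) :
    defect (f * g) = defect f + defect g := by
  have hsupport : #(f * g).support = #f.support + #g.support := by
    rw [h.support_mul, card_union_of_disjoint (disjoint_iff_disjoint_support.mp h)]
  have hcycles := congrArg Multiset.card h.cycleType_mul
  rw [Multiset.card_add] at hcycles
  have := two_mul_card_cycleType_le f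
  have := two_mul_card_cycleType_le g
  unfold defect
  omega

theorem IsCycle.defect_add_one {c : Perm α} (hc : c.IsCycle) : defect c + 1 = #c.support := by
  have := hc.two_le_card_support
  rw [defect, card_cycleType_eq_one.2 hc]
  omega

theorem IsCycle.defect_swap_mul {c : Perm α} (hc : c.IsCycle) {a : α} (ha : c a ≠ a) :
    defect (swap a (c a) * c) + 1 = defect c := by
  by_cases h2 : c (c a) = a
  · have hswap : c = swap a (c a) := hc.eq_swap_of_apply_apply_eq_self ha h2
    have hcard : #c.support = 2 := by rw [hswap]; exact card_support_swap ha.symm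
    have := hc.defect_add_one
    have hone : swap a (c a) * c = 1 :=
      (congrArg (swap a (c a) * ·) hswap).trans (swap_mul_self _ _)
    rw [hone, defect_eq_zero_iff.2 rfl]
    omega
  · have hsupport : #(swap a (c a) * c).support + 1 = #c.support := by
      rw [support_swap_mul_eq c a h2, sdiff_singleton_eq_erase,
        card_erase_add_one (mem_support.2 ha)]
    have := (hc.swap_mul ha h2).defect_add_one
    have := hc.defect_add_one
    omega

/-- Multiplying by a transposition of two points of one cycle splits that cycle in two. -/
theorem defect_swap_mul {π : Perm α} {a : α} (ha : π a ≠ a) :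
    defect (swap a (π a) * π) + 1 = defect π := by
  set c := π.cycleOf a
  have hdisj : (π * c⁻¹).Disjoint c :=
    disjoint_mul_inv_of_mem_cycleFactorsFinset
      (cycleOf_mem_cycleFactorsFinset_iff.2 (mem_support.2 ha))
  have hπ : π = c * (π * c⁻¹) := by rw [← hdisj.commute.eq, inv_mul_cancel_right]
  have hca : c a = π a := π.cycleOf_apply_self a
  have hdisj' : (swap a (c a) * c).Disjoint (π * c⁻¹) :=
    hdisj.symm.mono (fun _ hx => (mem_support_swap_mul_imp_mem_support_ne hx).1) le_rfl
  have hcycle := (π.isCycle_cycleOf ha).defect_swap_mul (a := a) (by rwa [hca])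
  calc defect (swap a (π a) * π) + 1 = defect (swap a (c a) * c * (π * c⁻¹)) + 1 := by
        rw [hca, mul_assoc, ← hπ]
    _ = defect (swap a (c a) * c) + 1 + defect (π * c⁻¹) := by rw [hdisj'.defect_mul]; ring
    _ = defect π := by rw [hcycle, add_comm, ← hdisj.defect_mul, inv_mul_cancel_right]

theorem card_defect_succ_le (k : ℕ) :
    #{π : Perm α | defect π = k + 1} ≤
      #{π : Perm α | defect π = k} * (Fintype.card α).choose 2 := by
  let swapOf : Sym2 α → Perm α := Sym2.lift ⟨swap, fun _ _ => swap_comm _ _⟩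
  have hsub : ({π : Perm α | defect π = k + 1} : Finset (Perm α)) ⊆
      (({π : Perm α | defect π = k} : Finset (Perm α)) ×ˢ
        (univ : Finset α).offDiag.image Sym2.mk.uncurry).image fun p => swapOf p.2 * p.1 := by
    intro π hπ
    rw [mem_filter] at hπ
    obtain ⟨a, ha'⟩ : ∃ a, π a ≠ a := by
      by_contra! h
      simp [defect_eq_zero_iff.2 (Equiv.ext h)] at hπ
    refine mem_image.2 ⟨(swap a (π a) * π, s(a, π a)), mem_product.2 ⟨?_, ?_⟩, ?_⟩
    · have := defect_swap_mul ha'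
      simp only [mem_filter, mem_univ, true_and]
      omega
    · exact mem_image.2 ⟨(a, π a), by simpa using ha'.symm, rfl⟩
    · simp [swapOf, swap_mul_self_mul]
  calc _ ≤ _ := card_le_card hsub
    _ ≤ _ := card_image_le
    _ = _ := by rw [card_product, Sym2.card_image_offDiag, card_univ]

theorem card_defect_le (k : ℕ) :
    #{π : Perm α | defect π = k} ≤ (Fintype.card α).choose 2 ^ k := by
  induction k with
  | zero =>
    simp only [defect_eq_zero_iff, pow_zero]
    exact card_le_one.2 fun _ h₁ _ h₂ => by simp_all
  | succ k ih =>
    rw [pow_succ]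
    exact (card_defect_succ_le k).trans (Nat.mul_le_mul_right _ ih)


theorem sum_pow_defect_le {r : ℝ} (hr : 0 ≤ r) (hq : (Fintype.card α).choose 2 * r < 1) :
    ∑ π ∈ univ.filter (· ≠ (1 : Perm α)), r ^ defect π ≤
      (Fintype.card α).choose 2 * r / (1 - (Fintype.card α).choose 2 * r) := by
  set C := (Fintype.card α).choose 2
  have hmaps : ∀ π ∈ univ.filter (· ≠ (1 : Perm α)), defect π ∈ Ico 1 (Fintype.card α + 1) :=
    fun π hπ => mem_Ico.2 ⟨Nat.one_le_iff_ne_zero.2 (defect_eq_zero_iff.not.2 (mem_filter.1 hπ).2),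
      Nat.lt_succ_of_le (defect_le_card π)⟩
  have hfiber (k : ℕ) :
      ∑ π ∈ (univ.filter (· ≠ (1 : Perm α))).filter (defect · = k), r ^ defect π ≤ (C * r) ^ k :=
    calc _ = ∑ π ∈ (univ.filter (· ≠ (1 : Perm α))).filter (defect · = k), r ^ k :=
          sum_congr rfl fun π hπ => by rw [(mem_filter.1 hπ).2]
      _ = #((univ.filter (· ≠ (1 : Perm α))).filter (defect · = k)) * r ^ k := by
          rw [sum_const, nsmul_eq_mul]
      _ ≤ (C ^ k : ℕ) * r ^ k := by
          gcongr
          exact (card_le_card (filter_subset_filter _ (filter_subset _ _))).trans (card_defect_le k)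
      _ = (C * r) ^ k := by push_cast; ring
  calc _ = ∑ k ∈ Ico 1 (Fintype.card α + 1),
        ∑ π ∈ (univ.filter (· ≠ (1 : Perm α))).filter (defect · = k), r ^ defect π :=
        (sum_fiberwise_of_maps_to hmaps _).symm
    _ ≤ ∑ k ∈ Ico 1 (Fintype.card α + 1), (C * r) ^ k := sum_le_sum fun k _ => hfiber k
    _ ≤ (C * r) ^ 1 / (1 - C * r) := geom_sum_Ico_le_of_lt_one (by positivity) hq
    _ = _ := by rw [pow_one]

end Equiv.Perm

section SchurTest

variable {G : Type*} [Group G] [Fintype G] [DecidableEq G]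

theorem sum_filter_ne_prod_eq {M : Type*} [AddCommMonoid M] (F : G → G → M) :
    ∑ p ∈ univ.filter (fun p : G × G => p.1 ≠ p.2), F p.1 p.2 =
      ∑ π ∈ univ.filter (· ≠ (1 : G)), ∑ g, F g (g * π) := by
  refine (sum_nbij' (fun p => (p.1⁻¹ * p.2, p.1)) (fun q => (q.2, q.2 * q.1)) ?_ ?_ ?_ ?_ ?_).trans
    (sum_product' _ _ fun π g => F g (g * π)) <;> simp [inv_mul_eq_one]

theorem sum_filter_ne_mul_le (u v K : G → ℝ) (hK : ∀ g, 0 ≤ K g) :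
    ∑ p ∈ univ.filter (fun p : G × G => p.1 ≠ p.2), u p.1 * v p.2 * K (p.1⁻¹ * p.2) ≤
      (∑ π ∈ univ.filter (· ≠ (1 : G)), K π) * ((∑ g, u g ^ 2 + ∑ g, v g ^ 2) / 2) := by
  rw [sum_filter_ne_prod_eq fun a b => u a * v b * K (a⁻¹ * b), sum_mul]
  refine sum_le_sum fun π _ => ?_
  calc ∑ g, u g * v (g * π) * K (g⁻¹ * (g * π))
      ≤ ∑ g, (u g ^ 2 + v (g * π) ^ 2) / 2 * K π := by
        refine sum_le_sum fun g _ => ?_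
        rw [inv_mul_cancel_left]
        have := two_mul_le_add_sq (u g) (v (g * π))
        exact mul_le_mul_of_nonneg_right (by linarith) (hK π)
    _ = K π * ((∑ g, u g ^ 2 + ∑ g, v g ^ 2) / 2) := by
        rw [← sum_mul, ← sum_div, sum_add_distrib,
          Fintype.sum_equiv (Equiv.mulRight π) (fun g => v (g * π) ^ 2) (fun g => v g ^ 2)
            fun _ => rfl]
        ring

end SchurTest

theorem le_inv_of_sqrt_le_inv_sqrt {S y : ℝ} (hy : 0 ≤ y) (h : √S ≤ (√y)⁻¹) : S ≤ y⁻¹ := by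
  rwa [← Real.sqrt_inv, Real.sqrt_le_sqrt_iff (inv_nonneg.2 hy)] at h

theorem cycleCount_add_defect {t : ℕ} (π : Equiv.Perm (Fin t)) : cycleCount π + π.defect = t := by
  have hfix : #{x | π x = x} + #π.support = t :=
    (card_filter_add_card_filter_not _).trans (card_fin t)
  have := π.two_mul_card_cycleType_le
  unfold cycleCount Equiv.Perm.defect
  omega

theorem pow_cycleCount_div_pow {t : ℕ} (π : Equiv.Perm (Fin t)) {d : ℝ} (hd : d ≠ 0) :
    d ^ cycleCount π / d ^ t = d⁻¹ ^ π.defect := by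
  calc d ^ cycleCount π / d ^ t = d ^ cycleCount π / d ^ (cycleCount π + π.defect) := by
        rw [cycleCount_add_defect]
    _ = d⁻¹ ^ π.defect := by rw [pow_add, div_mul_cancel_left₀ (pow_ne_zero _ hd), inv_pow]

theorem stmt_13_general (t d : ℕ) (hd : t ^ 2 < d)
    (b c : Equiv.Perm (Fin t) → ℂ)
    (hb : Real.sqrt (∑ σ, ‖b σ‖ ^ 2) ≤
      (Real.sqrt (1 - (t : ℝ) * ((t : ℝ) - 1) / (2 * d)))⁻¹)
    (hc : Real.sqrt (∑ σ, ‖c σ‖ ^ 2) ≤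
      (Real.sqrt (1 - (t : ℝ) * ((t : ℝ) - 1) / (2 * d)))⁻¹) :
    (∑ p ∈ Finset.univ.filter
        (fun p : Equiv.Perm (Fin t) × Equiv.Perm (Fin t) => p.1 ≠ p.2),
        ‖c p.1‖ * ‖b p.2‖ * ((d : ℝ) ^ (cycleCount (p.1⁻¹ * p.2)) / (d : ℝ) ^ t)) ≤
      (t : ℝ) * ((t : ℝ) - 1) / d * (1 - (t : ℝ) * ((t : ℝ) - 1) / (2 * d))⁻¹ ∧
    (t : ℝ) * ((t : ℝ) - 1) / d * (1 - (t : ℝ) * ((t : ℝ) - 1) / (2 * d))⁻¹ ≤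
      2 * (t : ℝ) * ((t : ℝ) - 1) / d := by
  set x := (t : ℝ) * ((t : ℝ) - 1) / (2 * d) with hx
  have hd₀ : (0 : ℝ) < d := by exact_mod_cast (Nat.zero_le _).trans_lt hd
  have hxC : (t.choose 2 : ℝ) * (d : ℝ)⁻¹ = x := by
    rw [Nat.cast_choose_two, hx]; field_simp
  have hx₀ : 0 ≤ x := hxC ▸ by positivity
  have hx₁ : x ≤ 1 / 2 := by
    have : (t : ℝ) ^ 2 < d := by exact_mod_cast hd
    rw [div_le_iff₀ (by positivity)]
    nlinarith
  have htd : (t : ℝ) * ((t : ℝ) - 1) / d = 2 * x := by rw [hx]; field_simp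
  have hinv : (1 - x)⁻¹ ≤ 2 := inv_le_of_inv_le₀ (by norm_num) (by linarith)
  have hb' := le_inv_of_sqrt_le_inv_sqrt (by linarith) hb
  have hc' := le_inv_of_sqrt_le_inv_sqrt (by linarith) hc
  have hrow := Equiv.Perm.sum_pow_defect_le (α := Fin t) (r := (d : ℝ)⁻¹) (by positivity)
    (by rw [Fintype.card_fin, hxC]; linarith)
  rw [Fintype.card_fin, hxC] at hrow
  have hschur := sum_filter_ne_mul_le (fun σ => ‖c σ‖) (fun σ => ‖b σ‖)
    (fun π => (d : ℝ)⁻¹ ^ π.defect) fun _ => by positivity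
  simp only [pow_cycleCount_div_pow _ hd₀.ne', htd]
  refine ⟨hschur.trans ?_, ?_⟩
  · calc _ ≤ x / (1 - x) * (1 - x)⁻¹ :=
          mul_le_mul hrow (by linarith) (by positivity)
            (div_nonneg hx₀ (by linarith))
      _ ≤ 2 * x * (1 - x)⁻¹ := by
          refine mul_le_mul_of_nonneg_right ?_ (inv_nonneg.2 (by linarith))
          rw [div_le_iff₀ (by linarith)]
          nlinarith
  · have : 2 * (t : ℝ) * ((t : ℝ) - 1) / d = 2 * (2 * x) := by rw [← htd]; ring
    rw [this]
    linarith [mul_le_mul_of_nonneg_left hinv (by linarith : (0 : ℝ) ≤ 2 * x)]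

/-- If `b, c ∈ ℂ^{S_t}` have `ℓ₂`-norms at most `(1 - t(t-1)/(2d))^{-1/2}` and
`d > t²`, then `Σ_{σ' ≠ σ} |c_{σ'}||b_σ| d^(c(σ'⁻¹σ)-t)` is at most
`(t(t-1)/d)(1 - t(t-1)/(2d))⁻¹`, which is at most `2t(t-1)/d`. -/
theorem stmt_13 (t d : ℕ) (ht : 0 < t) (hd : t ^ 2 < d)
    (b c : Equiv.Perm (Fin t) → ℂ)
    (hb : Real.sqrt (∑ σ, ‖b σ‖ ^ 2) ≤
      (Real.sqrt (1 - (t : ℝ) * ((t : ℝ) - 1) / (2 * d)))⁻¹)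
    (hc : Real.sqrt (∑ σ, ‖c σ‖ ^ 2) ≤
      (Real.sqrt (1 - (t : ℝ) * ((t : ℝ) - 1) / (2 * d)))⁻¹) :
    (∑ p ∈ Finset.univ.filter
        (fun p : Equiv.Perm (Fin t) × Equiv.Perm (Fin t) => p.1 ≠ p.2),
        ‖c p.1‖ * ‖b p.2‖ * ((d : ℝ) ^ (cycleCount (p.1⁻¹ * p.2)) / (d : ℝ) ^ t)) ≤
      (t : ℝ) * ((t : ℝ) - 1) / d * (1 - (t : ℝ) * ((t : ℝ) - 1) / (2 * d))⁻¹ ∧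
    (t : ℝ) * ((t : ℝ) - 1) / d * (1 - (t : ℝ) * ((t : ℝ) - 1) / (2 * d))⁻¹ ≤
      2 * (t : ℝ) * ((t : ℝ) - 1) / d :=
  stmt_13_general t d hd b c hb hc
end
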